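/- arXiv:1611.09443 — 4 statements merged into one kernel-verified Lean document; each statement's English description precedes it below -/
import Mathlib

section
/- A subgroup G of O(2) containing a rotation T ∉ {Id, -Id} is complete: every ellipse E centered at the origin with TE = E is a disk. Conversely, if G ⊆ O(2) contains no rotation other than possibly ±Id, then G is not complete. -/
open MeasureTheory
open scoped InnerProductSpace ENNReal

noncomputable section

variable {F : Type*} [NormedAddCommGroup F] [InnerProductSpace ℝ F]

/-- An ellipsoid centered at the origin: the image of the closed unit ball
under an invertible linear map. -/
def IsEllipsoid (s : Set F) : Prop :=
  ∃ A : F ≃ₗ[ℝ] F, s = A '' Metric.closedBall 0 1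

/-- A Euclidean ball centered at the origin (with positive radius). -/
def IsCenteredBall (s : Set F) : Prop :=
  ∃ r : ℝ, 0 < r ∧ s = Metric.closedBall (0 : F) r

/-- A set `G` of linear isometries is a complete group of symmetries if every
(origin-centered) ellipsoid invariant under all elements of `G` is a ball. -/
def IsCompleteGroup (G : Set (F ≃ₗᵢ[ℝ] F)) : Prop :=
  ∀ s : Set F, IsEllipsoid s → (∀ T ∈ G, T '' s = s) → IsCenteredBall s

/-- A function on the unit sphere (w.r.t. the `d`-dimensional Hausdorff measure)
is isotropic: its centroid is at the origin and its second moments in all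
directions of the sphere coincide. -/
def IsotropicOnSphere [MeasurableSpace F] [BorelSpace F] (f : F → ℝ) (d : ℝ) : Prop :=
  (∫ x in Metric.sphere (0 : F) 1, f x • x ∂μH[d]) = 0 ∧
  ∃ c : ℝ, ∀ x ∈ Metric.sphere (0 : F) 1,
    (∫ y in Metric.sphere (0 : F) 1, f y * ⟪x, y⟫_ℝ ^ 2 ∂μH[d]) = c

/-- A function on the unit sphere is completely symmetric: its centroid is at
the origin and its symmetry group (inside the orthogonal group) is complete. -/
def CompletelySymmetricFun [MeasurableSpace F] [BorelSpace F] (f : F → ℝ) (d : ℝ) : Prop :=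
  (∫ x in Metric.sphere (0 : F) 1, f x • x ∂μH[d]) = 0 ∧
  IsCompleteGroup {T : F ≃ₗᵢ[ℝ] F | ∀ x ∈ Metric.sphere (0 : F) 1, f (T x) = f x}

/-- A subset of a (finite-dimensional) inner product space is completely symmetric:
its centroid is at the origin and its symmetry group is complete. -/
def CompletelySymmetricSet [MeasurableSpace F] [BorelSpace F] [FiniteDimensional ℝ F]
    (s : Set F) : Prop :=
  (∫ x in s, x) = 0 ∧ IsCompleteGroup {T : F ≃ₗᵢ[ℝ] F | T '' s = s}

/-- The radial function of a star body. -/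
def radialFn (K : Set F) (x : F) : ℝ := sSup {t : ℝ | 0 ≤ t ∧ t • x ∈ K}

/-- A star body: compact, star-shaped with respect to the origin, with nonempty interior. -/
def IsStarBody (K : Set F) : Prop :=
  IsCompact K ∧ (interior K).Nonempty ∧ ∀ x ∈ K, ∀ t ∈ Set.Icc (0:ℝ) 1, t • x ∈ K

/-- A convex body: compact, convex, with nonempty interior. -/
def IsConvexBody (K : Set F) : Prop :=
  IsCompact K ∧ Convex ℝ K ∧ (interior K).Nonempty

/-- The support function of a set. -/
def suppFn (L : Set F) (u : F) : ℝ := sSup ((fun x => ⟪x, u⟫_ℝ) '' L)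

/-- A rotation: a linear isometry of determinant one. -/
def IsRotation (T : F ≃ₗᵢ[ℝ] F) : Prop :=
  LinearMap.det (T.toLinearEquiv : F →ₗ[ℝ] F) = 1


/-!
Write the ellipse as `A '' closedBall 0 1` and put `B = A⁻¹`. If `T` maps the ellipse onto
itself, then `A⁻¹ T A` maps the unit disk onto itself, so it is an isometry and the quadratic form
`‖B x‖²`, with matrix `M = Bᵀ B`, is `T`-invariant: `M` commutes with `T`. An eigenvector `v` of the
symmetric `M` and its image `T v` span the plane unless `v` is an eigenvector of `T`, which for a
rotation other than `±1` is impossible. Hence `M` is scalar and the ellipse is a disk.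

Conversely, if the only rotations in `G` are `±1`, then either `G ⊆ {±1}` or `G ⊆ {±1, ±R}` for a
reflection `R ∈ G`. Either way every element of `G` commutes with some reflection `R`, hence with
`A = 3 + R`, which stretches the two eigenlines of `R` by the different factors `4` and `2`; the
ellipse `A '' closedBall 0 1` is `G`-invariant but not a disk.
-/

open Metric Module

section NormedSpace

variable {E : Type*} [NormedAddCommGroup E] [NormedSpace ℝ E]

theorem LinearMap.norm_apply_le_of_mapsTo_closedBall {E' : Type*} [NormedAddCommGroup E']
    [NormedSpace ℝ E'] (f : E →ₗ[ℝ] E') {r : ℝ}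
    (h : Set.MapsTo f (closedBall 0 1) (closedBall 0 r)) (x : E) : ‖f x‖ ≤ r * ‖x‖ := by
  rcases eq_or_ne x 0 with rfl | hx
  · simp
  have hx' : 0 < ‖x‖ := norm_pos_iff.2 hx
  have := mem_closedBall_zero_iff.1 <| h (x := ‖x‖⁻¹ • x) <| by
    simp [norm_smul, hx'.ne']
  rwa [map_smul, norm_smul, norm_inv, norm_norm, inv_mul_le_iff₀ hx', mul_comm] at this

theorem LinearEquiv.image_closedBall_eq_closedBall_iff (A : E ≃ₗ[ℝ] E) {r : ℝ} (hr : 0 < r) :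
    A '' closedBall 0 1 = closedBall 0 r ↔ ∀ x, ‖A x‖ = r * ‖x‖ := by
  rw [A.image_eq_preimage_symm]
  constructor
  · intro h x
    have hA : ∀ y, ‖A y‖ ≤ r * ‖y‖ := by
      refine (A : E →ₗ[ℝ] E).norm_apply_le_of_mapsTo_closedBall fun y hy => ?_
      rw [← h]
      simpa using hy
    have hAsymm : ∀ y, ‖A.symm y‖ ≤ r⁻¹ * ‖y‖ := by
      refine (A.symm : E →ₗ[ℝ] E).norm_apply_le_of_mapsTo_closedBall fun y hy => ?_
      have : r • y ∈ A.symm ⁻¹' closedBall 0 1 := by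
        rw [h, mem_closedBall_zero_iff, norm_smul, Real.norm_of_nonneg hr.le]
        simpa [mul_le_iff_le_one_right hr] using hy
      simpa [norm_smul, abs_of_pos hr, ← le_inv_mul_iff₀ hr] using this
    have := hAsymm (A x)
    rw [A.symm_apply_apply, le_inv_mul_iff₀ hr] at this
    exact le_antisymm (hA x) this
  · intro h
    ext y
    have := h (A.symm y)
    simp only [Set.mem_preimage, mem_closedBall_zero_iff, A.apply_symm_apply] at this ⊢
    rw [this, mul_le_iff_le_one_right hr]

theorem LinearIsometryEquiv.image_image_closedBall_of_commute (T : E ≃ₗᵢ[ℝ] E) (A : E ≃ₗ[ℝ] E)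
    (h : ∀ x, T (A x) = A (T x)) : T '' (A '' closedBall 0 1) = A '' closedBall 0 1 := by
  rw [← Set.image_comp, show ⇑T ∘ ⇑A = ⇑A ∘ ⇑T from funext h, Set.image_comp,
    T.image_closedBall, map_zero]

end NormedSpace

theorem LinearEquiv.not_isCenteredBall_image_closedBall (A : F ≃ₗ[ℝ] F) {v w : F} {a b : ℝ}
    (hv : v ≠ 0) (hw : w ≠ 0) (hAv : A v = a • v) (hAw : A w = b • w) (hab : |a| ≠ |b|) :
    ¬ IsCenteredBall (A '' closedBall 0 1) := by
  rintro ⟨r, hr, h⟩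
  rw [A.image_closedBall_eq_closedBall_iff hr] at h
  have ha := h v
  have hb := h w
  rw [hAv, norm_smul, Real.norm_eq_abs] at ha
  rw [hAw, norm_smul, Real.norm_eq_abs] at hb
  exact hab <| (mul_right_cancel₀ (norm_ne_zero_iff.2 hv) ha).trans
    (mul_right_cancel₀ (norm_ne_zero_iff.2 hw) hb).symm

theorem not_isCompleteGroup_of_commute_involution {G : Set (F ≃ₗᵢ[ℝ] F)} {R : Module.End ℝ F}
    (hR : R * R = 1) (h1 : R ≠ 1) (h2 : R ≠ -1) (hG : ∀ T ∈ G, ∀ x, T (R x) = R (T x)) :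
    ¬ IsCompleteGroup G := by
  have hRR (x : F) : R (R x) = x := LinearMap.congr_fun hR x
  let A : F ≃ₗ[ℝ] F := LinearEquiv.ofLinearMap (3 + R) ((8 : ℝ)⁻¹ • (3 - R))
    (by
      ext x
      simp only [LinearMap.coe_comp, LinearMap.coe_smul, Function.comp_apply, Pi.smul_apply,
        LinearMap.sub_apply, Module.End.ofNat_apply, map_smul, LinearMap.add_apply, map_sub,
        LinearMap.map_smul_of_tower, hRR, LinearMap.id_coe, id_eq]
      module)
    (by
      ext x
      simp only [LinearMap.coe_comp, LinearMap.coe_smul, Function.comp_apply, LinearMap.add_apply,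
        Module.End.ofNat_apply, Pi.smul_apply, LinearMap.sub_apply, map_add,
        LinearMap.map_smul_of_tower, hRR, LinearMap.id_coe, id_eq]
      module)
  obtain ⟨v, hv, hRv⟩ : ∃ v ≠ 0, R v = v := by
    obtain ⟨x, hx⟩ : ∃ x, R x ≠ -x := by
      by_contra! h
      exact h2 (LinearMap.ext h)
    exact ⟨x + R x, fun h => hx (eq_neg_of_add_eq_zero_right h), by rw [map_add, hRR, add_comm]⟩
  obtain ⟨w, hw, hRw⟩ : ∃ w ≠ 0, R w = -w := by
    obtain ⟨x, hx⟩ : ∃ x, R x ≠ x := by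
      by_contra! h
      exact h1 (LinearMap.ext h)
    exact ⟨x - R x, fun h => hx (sub_eq_zero.1 h).symm, by rw [map_sub, hRR, neg_sub]⟩
  intro hG'
  refine A.not_isCenteredBall_image_closedBall hv hw (a := 4) (b := 2) ?_ ?_ (by norm_num)
    (hG' _ ⟨A, rfl⟩ fun T hT => T.image_image_closedBall_of_commute A fun x => ?_)
  · simp only [A, LinearEquiv.coe_ofLinearMap, LinearMap.add_apply, Module.End.ofNat_apply, hRv]
    module
  · simp only [A, LinearEquiv.coe_ofLinearMap, LinearMap.add_apply, Module.End.ofNat_apply, hRw]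
    module
  · simp [A, hG T hT]

section FiniteDimensional

variable [FiniteDimensional ℝ F]

theorem LinearEquiv.commute_adjoint_symm_mul_symm_of_image_eq (A : F ≃ₗ[ℝ] F) (T : F ≃ₗᵢ[ℝ] F)
    (hT : T '' (A '' closedBall 0 1) = A '' closedBall 0 1) :
    Commute ((A.symm : Module.End ℝ F).adjoint * A.symm) T.toLinearEquiv.toLinearMap := by
  let B : Module.End ℝ F := A.symm
  let C : F ≃ₗ[ℝ] F := A ≪≫ₗ T.toLinearEquiv ≪≫ₗ A.symm
  have hC : ∀ x, ‖C x‖ = ‖x‖ := by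
    have := (C.image_closedBall_eq_closedBall_iff one_pos).1 (by
      rw [show ⇑C = A.symm ∘ T ∘ A from rfl, Set.image_comp, Set.image_comp, hT]
      exact A.toEquiv.symm_image_image _)
    simpa using this
  have hB (x y : F) : ⟪B (T x), B (T y)⟫_ℝ = ⟪B x, B y⟫_ℝ := by
    simpa [C, B] using (LinearMap.norm_map_iff_inner_map_map C).1 hC (B x) (B y)
  refine LinearMap.ext fun x => ext_inner_right ℝ fun y => ?_
  calc ⟪B.adjoint (B (T x)), y⟫_ℝ = ⟪B (T x), B (T (T.symm y))⟫_ℝ := by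
        rw [LinearMap.adjoint_inner_left, T.apply_symm_apply]
    _ = ⟪B x, B (T.symm y)⟫_ℝ := hB _ _
    _ = ⟪B.adjoint (B x), T.symm y⟫_ℝ := (LinearMap.adjoint_inner_left _ _ _).symm
    _ = ⟪T (B.adjoint (B x)), y⟫_ℝ := (T.inner_map_eq_flip _ _).symm

theorem LinearEquiv.isCenteredBall_image_closedBall_of_adjoint_symm_mul_symm_eq [Nontrivial F]
    (A : F ≃ₗ[ℝ] F) {μ : ℝ} (hμ : (A.symm : Module.End ℝ F).adjoint * A.symm = μ • 1) :
    IsCenteredBall (A '' closedBall 0 1) := by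
  let B : Module.End ℝ F := A.symm
  have hBμ (x : F) : ‖B x‖ ^ 2 = μ * ‖x‖ ^ 2 := by
    rw [← real_inner_self_eq_norm_sq, ← LinearMap.adjoint_inner_left, ← Module.End.mul_apply, hμ,
      LinearMap.smul_apply, Module.End.one_apply, real_inner_smul_left, real_inner_self_eq_norm_sq]
  have hμ0 : 0 < μ := by
    obtain ⟨v, hv⟩ := exists_ne (0 : F)
    have hBv : 0 < ‖B v‖ ^ 2 := by positivity [show B v ≠ 0 by simpa [B] using hv]
    rw [hBμ] at hBv
    exact pos_of_mul_pos_left hBv (by positivity)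
  refine ⟨(√μ)⁻¹, by positivity, (A.image_closedBall_eq_closedBall_iff (by positivity)).2 fun x => ?_⟩
  have hx : ‖x‖ ^ 2 = μ * ‖A x‖ ^ 2 := by simpa [B] using hBμ (A x)
  rw [← Real.sqrt_sq (norm_nonneg x), hx, Real.sqrt_mul hμ0.le, Real.sqrt_sq (norm_nonneg _),
    inv_mul_cancel_left₀ (by positivity)]

theorem LinearIsometryEquiv.det_eq_one_or_neg_one (T : F ≃ₗᵢ[ℝ] F) :
    LinearMap.det (T.toLinearEquiv : F →ₗ[ℝ] F) = 1 ∨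
      LinearMap.det (T.toLinearEquiv : F →ₗ[ℝ] F) = -1 := by
  let b := stdOrthonormalBasis ℝ F
  have := b.det_to_matrix_orthonormalBasis_real (b.map T)
  rwa [show ⇑(b.map T) = (T.toLinearEquiv : F →ₗ[ℝ] F) ∘ b.toBasis by ext; simp, Basis.det_comp,
    Basis.det_self, mul_one] at this

end FiniteDimensional

theorem LinearIsometryEquiv.abs_eq_one_of_apply_eq_smul (T : F ≃ₗᵢ[ℝ] F) {v : F} (hv : v ≠ 0)
    {c : ℝ} (h : T v = c • v) : |c| = 1 := by
  have := T.norm_map v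
  rw [h, norm_smul, Real.norm_eq_abs] at this
  exact mul_eq_right₀ (norm_ne_zero_iff.2 hv) |>.1 this

section TwoDim

variable [Fact (finrank ℝ F = 2)]

attribute [local instance] FiniteDimensional.of_fact_finrank_eq_two

theorem exists_linearIsometryEquiv_det_eq_neg_one :
    ∃ R : F ≃ₗᵢ[ℝ] F, LinearMap.det (R.toLinearEquiv : F →ₗ[ℝ] F) = -1 := by
  have : Nontrivial F := nontrivial_of_finrank_eq_succ (Fact.out : finrank ℝ F = 2)
  obtain ⟨v, hv⟩ := exists_ne (0 : F)
  refine ⟨(ℝ ∙ v)ᗮ.reflection, ?_⟩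
  rw [Submodule.det_reflection, Submodule.orthogonal_orthogonal, finrank_span_singleton hv, pow_one]

theorem LinearIsometryEquiv.eq_refl_or_eq_neg_of_isRotation {T : F ≃ₗᵢ[ℝ] F} (hT : IsRotation T)
    {v : F} (hv : v ≠ 0) {c : ℝ} (h : T v = c • v) :
    T = LinearIsometryEquiv.refl ℝ F ∨ T = LinearIsometryEquiv.neg ℝ := by
  let o : Orientation ℝ F (Fin 2) := (finBasisOfFinrankEq ℝ F Fact.out).orientation
  obtain ⟨θ, rfl⟩ := o.exists_linearIsometryEquiv_eq_of_det_pos (hT ▸ one_pos)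
  rcases abs_eq zero_le_one |>.1 (abs_eq_one_of_apply_eq_smul _ hv h) with rfl | rfl
  · left
    rw [(o.rotation_eq_self_iff_angle_eq_zero hv θ).1 (by simpa using h), o.rotation_zero]
  · right
    have : o.rotation (Real.pi + θ) v = v := by
      rw [← o.rotation_rotation, h, o.rotation_pi_apply, neg_one_smul, neg_neg]
    rw [o.rotation_eq_self_iff_angle_eq_zero hv] at this
    rw [eq_neg_of_add_eq_zero_right this, Real.Angle.neg_coe_pi, o.rotation_pi]

theorem LinearIsometryEquiv.mul_self_eq_one_of_det_neg {R : F ≃ₗᵢ[ℝ] F}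
    (hR : LinearMap.det (R.toLinearEquiv : F →ₗ[ℝ] F) < 0) : R * R = 1 := by
  let o : Orientation ℝ F (Fin 2) := (finBasisOfFinrankEq ℝ F Fact.out).orientation
  have hrev (x y : F) : o.oangle (R x) (R y) = -o.oangle x y := by
    have := o.oangle_map (R x) (R y) R
    rw [(o.map_eq_neg_iff_det_neg R.toLinearEquiv (by simp [(Fact.out : finrank ℝ F = 2)])).2 hR,
      o.oangle_neg_orientation_eq_neg] at this
    simpa [neg_eq_iff_eq_neg] using this
  ext x
  rcases eq_or_ne x 0 with rfl | hx
  · simp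
  have hRx : R x ≠ 0 := by simpa using hx
  have hRRx : R (R x) ≠ 0 := by simpa using hx
  show R (R x) = x
  rw [o.eq_iff_oangle_eq_zero_of_norm_eq (by simp), ← o.oangle_add hRRx hRx hx, hrev, neg_add_cancel]

theorem LinearMap.IsSymmetric.eq_smul_one_of_commute {M T : Module.End ℝ F} (hM : M.IsSymmetric)
    (hMT : Commute M T) (hT : ∀ (c : ℝ) (v : F), T v = c • v → v = 0) :
    ∃ μ : ℝ, M = μ • 1 := by
  have hn : finrank ℝ F = 2 := Fact.out
  obtain ⟨hMv, hv⟩ := hM.hasEigenvector_eigenvectorBasis hn 0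
  set v := hM.eigenvectorBasis hn 0
  set μ := hM.eigenvalues hn 0
  replace hMv : M v = μ • v := Module.End.mem_eigenspace_iff.1 hMv
  have hli : LinearIndependent ℝ ![v, T v] :=
    (LinearIndependent.pair_iff' hv).2 fun a h => hv (hT a v h.symm)
  let b := basisOfLinearIndependentOfCardEqFinrank hli (by simp [hn])
  have hb : ⇑b = ![v, T v] := coe_basisOfLinearIndependentOfCardEqFinrank ..
  refine ⟨μ, b.ext <| Fin.forall_fin_two.2 ⟨?_, ?_⟩⟩
  · simpa [hb] using hMv
  · simp only [hb, Matrix.cons_val_one, Matrix.cons_val_zero, LinearMap.smul_apply,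
      Module.End.one_apply]
    rw [← Module.End.mul_apply, hMT.eq, Module.End.mul_apply, hMv, map_smul]

theorem IsEllipsoid.isCenteredBall_of_image_eq {T : F ≃ₗᵢ[ℝ] F}
    (hT : ∀ (c : ℝ) (v : F), T v = c • v → v = 0) {s : Set F} (hs : IsEllipsoid s)
    (hTs : T '' s = s) : IsCenteredBall s := by
  have : Nontrivial F := nontrivial_of_finrank_eq_succ (Fact.out : finrank ℝ F = 2)
  obtain ⟨A, rfl⟩ := hs
  obtain ⟨μ, hμ⟩ := (LinearMap.isSymmetric_adjoint_mul_self _).eq_smul_one_of_commute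
    (A.commute_adjoint_symm_mul_symm_of_image_eq T hTs) hT
  exact A.isCenteredBall_image_closedBall_of_adjoint_symm_mul_symm_eq hμ

theorem IsEllipsoid.isCenteredBall_of_isRotation {T : F ≃ₗᵢ[ℝ] F} (hT : IsRotation T)
    (h1 : T ≠ LinearIsometryEquiv.refl ℝ F) (h2 : T ≠ LinearIsometryEquiv.neg ℝ) {s : Set F}
    (hs : IsEllipsoid s) (hTs : T '' s = s) : IsCenteredBall s :=
  hs.isCenteredBall_of_image_eq (fun _ _ h => by
    by_contra hv
    rcases T.eq_refl_or_eq_neg_of_isRotation hT hv h with h' | h' <;> contradiction) hTs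

theorem exists_det_eq_neg_one_commute_of_forall_isRotation {G : Subgroup (F ≃ₗᵢ[ℝ] F)}
    (hG : ∀ T ∈ G, IsRotation T → T = LinearIsometryEquiv.refl ℝ F ∨ T = LinearIsometryEquiv.neg ℝ) :
    ∃ R : F ≃ₗᵢ[ℝ] F, LinearMap.det (R.toLinearEquiv : F →ₗ[ℝ] F) = -1 ∧
      ∀ T ∈ G, Commute T R := by
  have hcentral (T R : F ≃ₗᵢ[ℝ] F) (hT : IsRotation T) (hTG : T ∈ G) : Commute T R := by
    rcases hG T hTG hT with rfl | rfl
    · exact Commute.one_left R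
    · exact LinearIsometryEquiv.ext fun x => by simp
  by_cases h : ∃ R ∈ G, ¬ IsRotation R
  · obtain ⟨R, hRG, hR⟩ := h
    have hR' := R.det_eq_one_or_neg_one.resolve_left hR
    refine ⟨R, hR', fun T hTG => ?_⟩
    by_cases hT : IsRotation T
    · exact hcentral T R hT hTG
    have hTR : IsRotation (T * R) := by
      rw [IsRotation, show ((T * R).toLinearEquiv : F →ₗ[ℝ] F) =
        (T.toLinearEquiv : F →ₗ[ℝ] F) ∘ₗ (R.toLinearEquiv : F →ₗ[ℝ] F) from rfl,
        LinearMap.det_comp, T.det_eq_one_or_neg_one.resolve_left hT, hR']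
      norm_num
    have hRR := LinearIsometryEquiv.mul_self_eq_one_of_det_neg (hR' ▸ neg_one_lt_zero)
    have hTR_comm := hcentral (T * R) R hTR (mul_mem hTG hRG)
    calc T * R = T * R * R * R := by rw [mul_assoc (T * R), hRR, mul_one]
      _ = R * T * (R * R) := by rw [hTR_comm.eq]; group
      _ = R * T := by rw [hRR, mul_one]
  · simp only [not_exists, not_and, not_not] at h
    obtain ⟨R, hR⟩ := exists_linearIsometryEquiv_det_eq_neg_one (F := F)
    exact ⟨R, hR, fun T hTG => hcentral T R (h T hTG) hTG⟩

theorem not_isCompleteGroup_of_forall_isRotation {G : Subgroup (F ≃ₗᵢ[ℝ] F)}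
    (hG : ∀ T ∈ G, IsRotation T → T = LinearIsometryEquiv.refl ℝ F ∨ T = LinearIsometryEquiv.neg ℝ) :
    ¬ IsCompleteGroup (G : Set (F ≃ₗᵢ[ℝ] F)) := by
  obtain ⟨R, hR, hGR⟩ := exists_det_eq_neg_one_commute_of_forall_isRotation hG
  have hRR := LinearIsometryEquiv.mul_self_eq_one_of_det_neg (hR ▸ neg_one_lt_zero)
  refine not_isCompleteGroup_of_commute_involution (R := R.toLinearEquiv.toLinearMap) ?_ ?_ ?_
    fun T hT x => congr($(hGR T hT) x)
  · exact LinearMap.ext fun x => congr($hRR x)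
  · intro h
    have := congrArg LinearMap.det h
    rw [hR, map_one] at this
    norm_num at this
  · intro h
    have := congrArg LinearMap.det h
    rw [hR, ← neg_one_smul ℝ (1 : Module.End ℝ F), LinearMap.det_smul, map_one] at this
    norm_num [(Fact.out : finrank ℝ F = 2)] at this

end TwoDim

/-- A subgroup of `O(2)` containing a rotation other than `±Id` is
complete (indeed any ellipse invariant under such a rotation is a disk); conversely a
subgroup of `O(2)` containing no rotation other than `±Id` is not complete. -/
theorem stmt6 :
    (∀ T : EuclideanSpace ℝ (Fin 2) ≃ₗᵢ[ℝ] EuclideanSpace ℝ (Fin 2),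
      IsRotation T → T ≠ LinearIsometryEquiv.refl ℝ (EuclideanSpace ℝ (Fin 2)) →
      T ≠ LinearIsometryEquiv.neg ℝ →
      ∀ s : Set (EuclideanSpace ℝ (Fin 2)), IsEllipsoid s → T '' s = s → IsCenteredBall s) ∧
    (∀ G : Subgroup (EuclideanSpace ℝ (Fin 2) ≃ₗᵢ[ℝ] EuclideanSpace ℝ (Fin 2)),
      (∃ T ∈ G, IsRotation T ∧ T ≠ LinearIsometryEquiv.refl ℝ (EuclideanSpace ℝ (Fin 2)) ∧
        T ≠ LinearIsometryEquiv.neg ℝ) →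
      IsCompleteGroup (G : Set (EuclideanSpace ℝ (Fin 2) ≃ₗᵢ[ℝ] EuclideanSpace ℝ (Fin 2)))) ∧
    (∀ G : Subgroup (EuclideanSpace ℝ (Fin 2) ≃ₗᵢ[ℝ] EuclideanSpace ℝ (Fin 2)),
      (∀ T ∈ G, IsRotation T → T = LinearIsometryEquiv.refl ℝ (EuclideanSpace ℝ (Fin 2)) ∨
        T = LinearIsometryEquiv.neg ℝ) →
      ¬ IsCompleteGroup (G : Set (EuclideanSpace ℝ (Fin 2) ≃ₗᵢ[ℝ] EuclideanSpace ℝ (Fin 2)))) := by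
  have : Fact (finrank ℝ (EuclideanSpace ℝ (Fin 2)) = 2) := ⟨finrank_euclideanSpace_fin⟩
  exact ⟨fun T hT h1 h2 s hs hTs => hs.isCenteredBall_of_isRotation hT h1 h2 hTs,
    fun G ⟨T, hTG, hT, h1, h2⟩ s hs hGs => hs.isCenteredBall_of_isRotation hT h1 h2 (hGs T hTG),
    fun G hG => not_isCompleteGroup_of_forall_isRotation hG⟩
end
end

section
/- Let f : S^{n-1} → [0,∞) be integrable and completely symmetric. Then f is isotropic, i.e. ∫_{S^{n-1}} x f(x) dx = 0 and the map u ↦ ∫_{S^{n-1}} ⟨x,u⟩² f(x) dx is constant on S^{n-1}. -/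
open MeasureTheory
open scoped InnerProductSpace ENNReal

noncomputable section

variable {F : Type*} [NormedAddCommGroup F] [InnerProductSpace ℝ F]

/-! The second-moment operator `M u = ∫ f(y) ⟪y, u⟫ y` of `f` over the sphere is positive, its
quadratic form is the function `h(u)²` of the paper, and it commutes with every symmetry of `f`
because Hausdorff measure is invariant under isometries. Hence `1 + M` maps the unit ball onto an
ellipsoid invariant under the symmetry group, which by completeness is a ball of some radius `r`.
A positive operator that multiplies all norms by `r` is `r • 1`, so `⟪M x, x⟫ = r - 1` on the
unit sphere. -/

section LinearAlgebra

variable {E : Type*} [NormedAddCommGroup E] [InnerProductSpace ℝ E]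

theorem LinearMap.norm_apply_le_of_mapsTo_closedBall_s8 (L : F →ₗ[ℝ] E) {s r : ℝ} (hs : 0 < s)
    (h : Set.MapsTo L (Metric.closedBall 0 s) (Metric.closedBall 0 r)) (x : F) :
    ‖L x‖ ≤ r / s * ‖x‖ := by
  rcases eq_or_ne x 0 with rfl | hx
  · simp
  have hxn : 0 < ‖x‖ := norm_pos_iff.2 hx
  have hmem := h (x := (s / ‖x‖) • x) (by
    simp [norm_smul, abs_of_pos hs, div_mul_cancel₀ _ hxn.ne'])
  rw [Metric.mem_closedBall, dist_zero_right, map_smul, norm_smul, Real.norm_eq_abs,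
    abs_of_pos (div_pos hs hxn)] at hmem
  rw [div_mul_eq_mul_div, le_div_iff₀ hs]
  calc ‖L x‖ * s = s / ‖x‖ * ‖L x‖ * ‖x‖ := by field_simp
    _ ≤ r * ‖x‖ := by gcongr

theorem LinearEquiv.norm_apply_eq_of_image_closedBall (A : F ≃ₗ[ℝ] F) {r : ℝ} (hr : 0 < r)
    (h : A '' Metric.closedBall 0 1 = Metric.closedBall 0 r) (x : F) :
    ‖A x‖ = r * ‖x‖ := by
  have hA : Set.MapsTo A (Metric.closedBall 0 1) (Metric.closedBall 0 r) :=
    h ▸ Set.mapsTo_image A _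
  have hA' : Set.MapsTo A.symm (Metric.closedBall 0 r) (Metric.closedBall 0 1) := by
    rw [← h]
    rintro _ ⟨y, hy, rfl⟩
    simpa using hy
  have h1 := (A : F →ₗ[ℝ] F).norm_apply_le_of_mapsTo_closedBall_s8 one_pos hA x
  have h2 := (A.symm : F →ₗ[ℝ] F).norm_apply_le_of_mapsTo_closedBall_s8 hr hA' (A x)
  simp only [LinearEquiv.coe_coe, LinearEquiv.symm_apply_apply, div_one] at h1 h2
  rw [one_div_mul_eq_div, le_div_iff₀ hr] at h2
  linarith

theorem LinearMap.IsPositive.eq_smul_one_of_norm_apply_eq {B : E →ₗ[ℝ] E} (hB : B.IsPositive)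
    {r : ℝ} (hr : 0 < r) (h : ∀ x, ‖B x‖ = r * ‖x‖) : B = r • 1 := by
  have hsq : B * B = r ^ 2 • 1 := by
    have hsymm : (B * B - r ^ 2 • 1).IsSymmetric :=
      (hB.isSymmetric.mul_of_commute hB.isSymmetric rfl).sub
        (LinearMap.IsSymmetric.id.smul RCLike.conj_to_real)
    rw [← sub_eq_zero, ← hsymm.inner_map_self_eq_zero]
    intro y
    rw [LinearMap.sub_apply, inner_sub_left, Module.End.mul_apply, hB.isSymmetric,
      real_inner_self_eq_norm_sq, h, LinearMap.smul_apply, Module.End.one_apply,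
      real_inner_smul_left, real_inner_self_eq_norm_sq]
    ring
  -- `w = B x - r x` satisfies `B w = -r w`, which positivity of `B` forbids unless `w = 0`.
  ext x
  set w := B x - r • x with hw
  have hBw : B w = -r • w := by
    rw [hw, map_sub, map_smul, ← Module.End.mul_apply, hsq, LinearMap.smul_apply,
      Module.End.one_apply]
    module
  have := hB.inner_nonneg_left w
  rw [hBw, real_inner_smul_left, real_inner_self_eq_norm_sq] at this
  have hw0 : ‖w‖ ^ 2 = 0 := by nlinarith [sq_nonneg ‖w‖]
  rw [LinearMap.smul_apply, Module.End.one_apply, ← sub_eq_zero, ← norm_eq_zero]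
  exact pow_eq_zero_iff two_ne_zero |>.1 hw0

end LinearAlgebra

theorem IsCompleteGroup.exists_eq_smul_one [FiniteDimensional ℝ F] {G : Set (F ≃ₗᵢ[ℝ] F)}
    (hG : IsCompleteGroup G) {A : F →ₗ[ℝ] F} (hA : A.IsPositive)
    (hcomm : ∀ T ∈ G, ∀ x, A (T x) = T (A x)) : ∃ c : ℝ, A = c • 1 := by
  -- Adding the identity makes `A` invertible, so that it maps the unit ball onto an ellipsoid.
  set B : F →ₗ[ℝ] F := 1 + A with hB_def
  have hB : B.IsPositive := LinearMap.isPositive_one.add hA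
  have hinj : Function.Injective B := by
    refine (injective_iff_map_eq_zero B).2 fun x hx => ?_
    have hpos := hA.inner_nonneg_left x
    have hBx : ⟪B x, x⟫_ℝ = ‖x‖ ^ 2 + ⟪A x, x⟫_ℝ := by
      rw [hB_def, LinearMap.add_apply, Module.End.one_apply, inner_add_left,
        real_inner_self_eq_norm_sq]
    rw [hx, inner_zero_left] at hBx
    rw [← norm_eq_zero, ← sq_eq_zero_iff]
    linarith [sq_nonneg ‖x‖]
  set Be := LinearEquiv.ofInjectiveEndo B hinj
  obtain ⟨r, hr, hball⟩ := hG (Be '' Metric.closedBall 0 1) ⟨Be, rfl⟩ fun T hT => by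
    have hBT : ∀ x, B (T x) = T (B x) := fun x => by
      simp [hB_def, hcomm T hT x]
    calc T '' (Be '' Metric.closedBall 0 1) = Be '' (T '' Metric.closedBall 0 1) := by
          simp only [Set.image_image, Be, LinearEquiv.coe_ofInjectiveEndo, hBT]
      _ = Be '' Metric.closedBall 0 1 := by rw [T.image_closedBall, map_zero]
  refine ⟨r - 1, ?_⟩
  rw [sub_smul, one_smul,
    ← hB.eq_smul_one_of_norm_apply_eq hr (Be.norm_apply_eq_of_image_closedBall hr hball)]
  simp [hB_def]

section SphereMoment

variable [MeasurableSpace F] [BorelSpace F] [FiniteDimensional ℝ F]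

def sphereMoment (μ : Measure F) (f : F → ℝ) : F →L[ℝ] F :=
  ∫ y in Metric.sphere 0 1, f y • InnerProductSpace.rankOne ℝ y y ∂μ

variable {μ : Measure F} {f : F → ℝ}

theorem inner_sphereMoment_apply (hf : IntegrableOn f (Metric.sphere 0 1) μ) (u w : F) :
    ⟪sphereMoment μ f u, w⟫_ℝ =
      ∫ y in Metric.sphere 0 1, f y * (⟪y, u⟫_ℝ * ⟪y, w⟫_ℝ) ∂μ := by
  have hint : IntegrableOn (fun y => f y • InnerProductSpace.rankOne ℝ y y)
      (Metric.sphere 0 1) μ :=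
    hf.smul_continuousOn
      (((InnerProductSpace.rankOne ℝ).continuous.clm_apply continuous_id).continuousOn)
      (isCompact_sphere 0 1)
  have := ((innerSL ℝ w).comp (ContinuousLinearMap.apply ℝ F u)).integral_comp_comm hint
  simp only [ContinuousLinearMap.coe_comp, Function.comp_apply, ContinuousLinearMap.apply_apply,
    smul_apply, InnerProductSpace.rankOne_apply, innerSL_apply_apply,
    inner_smul_right] at this
  rw [real_inner_comm, sphereMoment, ← this]
  simp_rw [real_inner_comm w]

theorem isPositive_sphereMoment (hf : IntegrableOn f (Metric.sphere 0 1) μ)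
    (hnonneg : ∀ x ∈ Metric.sphere 0 1, 0 ≤ f x) : (sphereMoment μ f).IsPositive := by
  refine ⟨fun u w => ?_, fun u => ?_⟩
  · rw [ContinuousLinearMap.coe_coe, inner_sphereMoment_apply hf, real_inner_comm,
      inner_sphereMoment_apply hf]
    simp_rw [mul_comm ⟪_, u⟫_ℝ]
  · rw [ContinuousLinearMap.reApplyInnerSelf_apply, RCLike.re_to_real, inner_sphereMoment_apply hf]
    exact setIntegral_nonneg Metric.isClosed_sphere.measurableSet fun y hy =>
      mul_nonneg (hnonneg y hy) (mul_self_nonneg _)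

theorem sphereMoment_apply_map (hf : IntegrableOn f (Metric.sphere 0 1) μ) (T : F ≃ₗᵢ[ℝ] F)
    (hT : MeasurePreserving T μ μ) (hfT : ∀ x ∈ Metric.sphere 0 1, f (T x) = f x) (u : F) :
    sphereMoment μ f (T u) = T (sphereMoment μ f u) := by
  refine ext_inner_right ℝ fun v => ?_
  rw [T.inner_map_eq_flip, inner_sphereMoment_apply hf, inner_sphereMoment_apply hf,
    ← hT.setIntegral_preimage_emb T.toHomeomorph.measurableEmbedding, T.preimage_sphere, map_zero]
  refine setIntegral_congr_fun Metric.isClosed_sphere.measurableSet fun y hy => ?_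
  simp only [hfT y hy, T.inner_map_map, T.inner_map_eq_flip]

end SphereMoment

theorem CompletelySymmetricFun.isotropicOnSphere [MeasurableSpace F] [BorelSpace F]
    [FiniteDimensional ℝ F] {d : ℝ} {f : F → ℝ} (hcs : CompletelySymmetricFun f d)
    (hf : IntegrableOn f (Metric.sphere 0 1) μH[d])
    (hnonneg : ∀ x ∈ Metric.sphere 0 1, 0 ≤ f x) : IsotropicOnSphere f d := by
  obtain ⟨c, hc⟩ := hcs.2.exists_eq_smul_one (isPositive_sphereMoment hf hnonneg).toLinearMap
    fun T hT => sphereMoment_apply_map hf T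
      (T.toIsometryEquiv.measurePreserving_hausdorffMeasure d) hT
  refine ⟨hcs.1, c, fun x hx => ?_⟩
  have hMx : sphereMoment μH[d] f x = c • x := LinearMap.congr_fun hc x
  calc ∫ y in Metric.sphere 0 1, f y * ⟪x, y⟫_ℝ ^ 2 ∂μH[d]
        = ⟪sphereMoment μH[d] f x, x⟫_ℝ := by
        rw [inner_sphereMoment_apply hf]
        simp_rw [real_inner_comm x, sq]
    _ = c := by
        rw [hMx, real_inner_smul_left, real_inner_self_eq_norm_sq, mem_sphere_zero_iff_norm.1 hx]
        ring

/-- An integrable, nonnegative, completely symmetric function on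
`S^{n-1}` is isotropic. -/
theorem stmt8 (n : ℕ) (f : EuclideanSpace ℝ (Fin n) → ℝ)
    (hint : IntegrableOn f (Metric.sphere 0 1)
      (μH[(n:ℝ)-1] : Measure (EuclideanSpace ℝ (Fin n))))
    (hnonneg : ∀ x, 0 ≤ f x)
    (hcs : CompletelySymmetricFun f ((n:ℝ)-1)) :
    IsotropicOnSphere f ((n:ℝ)-1) :=
  hcs.isotropicOnSphere hint fun x _ => hnonneg x
end
end

section
/- Let K be an isotropic star body in ℝ^n with centroid at the origin. Then ∫_K |x|² dx = c₂ · B(K)^{1/n}, where B(K) = ∫_K ⋯ ∫_K det(x₁,…,x_n)² dx₁⋯dx_n and c₂ > 0 is a constant depending only on n. -/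
open MeasureTheory
open scoped InnerProductSpace ENNReal

noncomputable section

variable {F : Type*} [NormedAddCommGroup F] [InnerProductSpace ℝ F]

/-- The quantity `B(K) = ∫_K ⋯ ∫_K det(x₁,…,x_n)² dx₁⋯dx_n`. -/
def Bquant (n : ℕ) (K : Set (EuclideanSpace ℝ (Fin n))) : ℝ :=
  ∫ x : Fin n → EuclideanSpace ℝ (Fin n) in Set.univ.pi (fun _ => K),
    (Matrix.det (Matrix.of fun i j => x i j)) ^ 2

/-!
Writing the determinant as a signed sum over permutations and integrating term by term
(Fubini on `Kⁿ`) shows `B(K) = n! · det M`, where `M i j = ∫_K x_i x_j` is the matrix of second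
moments. Isotropy says, by polarization, that `M = c • 1`, so `B(K) = n! cⁿ`, while
`∫_K |x|² = tr M = n c`. Hence `∫_K |x|² = n (n!)^{-1/n} B(K)^{1/n}`.
-/

open Equiv

section Determinant

variable {ι R : Type*} [Fintype ι] [DecidableEq ι] [CommRing R]

theorem Matrix.det_sq_eq_sum_perm_sum_perm (A : Matrix ι ι R) :
    A.det ^ 2 = ∑ σ : Perm ι, ∑ τ : Perm ι,
      ((Perm.sign σ : ℤ) : R) * (Perm.sign τ : ℤ) * ∏ i, A i (σ i) * A i (τ i) := by
  have hdet : A.det = ∑ σ : Perm ι, ((Perm.sign σ : ℤ) : R) * ∏ i, A i (σ i) := by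
    rw [← Matrix.det_transpose, Matrix.det_apply']
    rfl
  rw [sq, hdet, Finset.sum_mul_sum]
  refine Finset.sum_congr rfl fun σ _ => Finset.sum_congr rfl fun τ _ => ?_
  rw [Finset.prod_mul_distrib]
  ring

theorem Matrix.sum_perm_sum_perm_sign_mul_prod_eq_factorial_mul_det (G : Matrix ι ι R) :
    ∑ σ : Perm ι, ∑ τ : Perm ι,
      ((Perm.sign σ : ℤ) : R) * (Perm.sign τ : ℤ) * ∏ i, G (σ i) (τ i)
      = (Fintype.card ι).factorial * G.det := by
  have hrow (σ : Perm ι) :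
      ∑ τ : Perm ι, ((Perm.sign τ : ℤ) : R) * ∏ i, G (σ i) (τ i)
        = (Perm.sign σ : ℤ) * G.det := by
    rw [← Matrix.det_permute, ← Matrix.det_transpose, Matrix.det_apply']
    rfl
  have hsign (σ : Perm ι) : ((Perm.sign σ : ℤ) : R) * (Perm.sign σ : ℤ) = 1 := by
    rw [← Int.cast_mul, ← Units.val_mul, Int.units_mul_self, Units.val_one, Int.cast_one]
  calc _ = ∑ σ : Perm ι, ((Perm.sign σ : ℤ) : R) * ((Perm.sign σ : ℤ) * G.det) := by
        simp only [mul_assoc, ← Finset.mul_sum, hrow]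
    _ = (Fintype.card ι).factorial * G.det := by
        simp only [← mul_assoc, hsign, one_mul, Finset.sum_const, Finset.card_univ,
          Fintype.card_perm, nsmul_eq_mul]

end Determinant

theorem MeasureTheory.integral_det_sq_pi {ι α : Type*} [Fintype ι] [DecidableEq ι]
    [MeasurableSpace α] (μ : Measure α) [SigmaFinite μ] (w : ι → α → ℝ)
    (hw : ∀ i j, Integrable (fun y => w i y * w j y) μ) :
    ∫ x : ι → α, (Matrix.of fun i j => w j (x i)).det ^ 2 ∂Measure.pi (fun _ => μ)
      = (Fintype.card ι).factorial * (Matrix.of fun i j => ∫ y, w i y * w j y ∂μ).det := by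
  have hint (σ τ : Perm ι) : Integrable
      (fun x : ι → α => ∏ i, w (σ i) (x i) * w (τ i) (x i)) (Measure.pi fun _ => μ) :=
    Integrable.fintype_prod fun i => hw (σ i) (τ i)
  simp only [Matrix.det_sq_eq_sum_perm_sum_perm, Matrix.of_apply]
  rw [integral_finsetSum _ fun σ _ => integrable_finsetSum _ fun τ _ =>
    (hint σ τ).const_mul _]
  rw [← Matrix.sum_perm_sum_perm_sign_mul_prod_eq_factorial_mul_det]
  refine Finset.sum_congr rfl fun σ _ => ?_
  rw [integral_finsetSum _ fun τ _ => (hint σ τ).const_mul _]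
  refine Finset.sum_congr rfl fun τ _ => ?_
  rw [integral_const_mul, integral_fintype_prod_eq_prod fun i y => w (σ i) y * w (τ i) y]
  rfl

section Isotropic

variable [MeasurableSpace F] {μ : Measure F} {c : ℝ}

theorem MeasureTheory.integral_inner_sq_eq_mul_norm_sq
    (hc : ∀ y ∈ Metric.sphere (0 : F) 1, ∫ x, ⟪x, y⟫_ℝ ^ 2 ∂μ = c) (y : F) :
    ∫ x, ⟪x, y⟫_ℝ ^ 2 ∂μ = c * ‖y‖ ^ 2 := by
  rcases eq_or_ne y 0 with rfl | hy
  · simp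
  have hu : ‖y‖⁻¹ • y ∈ Metric.sphere (0 : F) 1 := by
    simp [norm_smul, hy]
  calc ∫ x, ⟪x, y⟫_ℝ ^ 2 ∂μ = ∫ x, ‖y‖ ^ 2 * ⟪x, ‖y‖⁻¹ • y⟫_ℝ ^ 2 ∂μ := by
        congr 1
        ext x
        rw [inner_smul_right]
        field_simp
    _ = c * ‖y‖ ^ 2 := by rw [integral_const_mul, hc _ hu, mul_comm]

theorem MeasureTheory.integral_inner_mul_inner_eq_mul_inner
    (hμ : ∀ y : F, Integrable (fun x => ⟪x, y⟫_ℝ ^ 2) μ)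
    (hc : ∀ y ∈ Metric.sphere (0 : F) 1, ∫ x, ⟪x, y⟫_ℝ ^ 2 ∂μ = c) (u v : F) :
    ∫ x, ⟪x, u⟫_ℝ * ⟪x, v⟫_ℝ ∂μ = c * ⟪u, v⟫_ℝ := by
  have hpol (x : F) :
      ⟪x, u⟫_ℝ * ⟪x, v⟫_ℝ = (⟪x, u + v⟫_ℝ ^ 2 - ⟪x, u - v⟫_ℝ ^ 2) / 4 := by
    rw [inner_add_right, inner_sub_right]
    ring
  simp only [hpol]
  rw [integral_div, integral_sub (hμ _) (hμ _), integral_inner_sq_eq_mul_norm_sq hc,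
    integral_inner_sq_eq_mul_norm_sq hc, norm_add_sq_real, norm_sub_sq_real]
  ring

end Isotropic

section Euclidean

variable {ι : Type*} [Fintype ι] [DecidableEq ι] {μ : Measure (EuclideanSpace ℝ ι)} {c : ℝ}

theorem MeasureTheory.secondMoment_eq_smul_one
    (hμ : ∀ y : EuclideanSpace ℝ ι, Integrable (fun x => ⟪x, y⟫_ℝ ^ 2) μ)
    (hc : ∀ y ∈ Metric.sphere (0 : EuclideanSpace ℝ ι) 1, ∫ x, ⟪x, y⟫_ℝ ^ 2 ∂μ = c) :
    (Matrix.of fun i j => ∫ x, x i * x j ∂μ) = c • (1 : Matrix ι ι ℝ) := by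
  ext i j
  have h := integral_inner_mul_inner_eq_mul_inner hμ hc
    (EuclideanSpace.single i 1) (EuclideanSpace.single j 1)
  simpa [EuclideanSpace.inner_single_right, Matrix.one_apply, eq_comm] using h

theorem MeasureTheory.integral_norm_sq_eq_card_mul
    (hμ : ∀ y : EuclideanSpace ℝ ι, Integrable (fun x => ⟪x, y⟫_ℝ ^ 2) μ)
    (hc : ∀ y ∈ Metric.sphere (0 : EuclideanSpace ℝ ι) 1, ∫ x, ⟪x, y⟫_ℝ ^ 2 ∂μ = c) :
    ∫ x, ‖x‖ ^ 2 ∂μ = Fintype.card ι * c := by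
  have hnorm (x : EuclideanSpace ℝ ι) :
      ‖x‖ ^ 2 = ∑ i, ⟪x, EuclideanSpace.single i 1⟫_ℝ ^ 2 := by
    simp [EuclideanSpace.norm_sq_eq, EuclideanSpace.inner_single_right]
  simp only [hnorm]
  rw [integral_finsetSum _ fun i _ => hμ _]
  simp [integral_inner_sq_eq_mul_norm_sq hc]

end Euclidean

/-- For an isotropic star body `K` with centroid at the origin,
`∫_K |x|² dx = c₂ B(K)^{1/n}` for a dimensional constant `c₂ > 0`. -/
theorem stmt10 (n : ℕ) (hn : 1 ≤ n) :
    ∃ c₂ : ℝ, 0 < c₂ ∧ ∀ K : Set (EuclideanSpace ℝ (Fin n)),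
      IsStarBody K → (∫ x in K, x) = 0 →
      (∃ c : ℝ, ∀ y ∈ Metric.sphere (0 : EuclideanSpace ℝ (Fin n)) 1,
        (∫ x in K, ⟪x, y⟫_ℝ ^ 2) = c) →
      (∫ x in K, ‖x‖ ^ 2) = c₂ * Bquant n K ^ ((1:ℝ)/n) := by
  have hfac : (0 : ℝ) < n.factorial := mod_cast n.factorial_pos
  refine ⟨n / (n.factorial : ℝ) ^ ((1:ℝ)/n),
    div_pos (mod_cast hn) (Real.rpow_pos_of_pos hfac _), ?_⟩
  rintro K ⟨hK, -, -⟩ - ⟨c, hc⟩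
  have hμ (y : EuclideanSpace ℝ (Fin n)) :
      Integrable (fun x => ⟪x, y⟫_ℝ ^ 2) (volume.restrict K) :=
    ((continuous_id.inner continuous_const).pow 2).continuousOn.integrableOn_compact hK
  have hc0 : 0 ≤ c := hc _ (by simp : EuclideanSpace.single (⟨0, hn⟩ : Fin n) (1 : ℝ) ∈ _) ▸
    integral_nonneg fun x => sq_nonneg _
  have hB : Bquant n K = n.factorial * c ^ n := by
    rw [Bquant, volume_pi, Measure.restrict_pi_pi,
      integral_det_sq_pi _ (fun j (x : EuclideanSpace ℝ (Fin n)) => x j) fun i j =>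
        (by fun_prop : Continuous fun x : EuclideanSpace ℝ (Fin n) => x i * x j)
          |>.continuousOn.integrableOn_compact hK,
      secondMoment_eq_smul_one hμ hc, Matrix.det_smul, Matrix.det_one, Fintype.card_fin,
      mul_one]
  rw [integral_norm_sq_eq_card_mul hμ hc, hB, Real.mul_rpow hfac.le (by positivity), one_div,
    Real.pow_rpow_inv_natCast hc0 (by omega), Fintype.card_fin]
  field_simp
end
end

section
/- For any compact set K ⊂ ℝ^n with positive volume and centroid at the origin, ∫_K |x|² dx ≥ c₂ B(K)^{1/n}, with equality if and only if K is isotropic; here c₂ is the same dimensional constant for which equality holds for isotropic bodies. -/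
open MeasureTheory
open scoped InnerProductSpace ENNReal

noncomputable section

variable {F : Type*} [NormedAddCommGroup F] [InnerProductSpace ℝ F]

/-! The second moments `M_K = (∫_K x_i x_j dx)` form a positive semidefinite matrix with
`∫_K |x|² dx = tr M_K` and `∫_K ⟪x, y⟫² dx = yᵀ M_K y`. Expanding `det(x₁,…,x_n)²` by the
Leibniz formula and integrating coordinate by coordinate gives `B(K) = n! det M_K`. The
inequality is then AM–GM for the eigenvalues of `M_K`, `tr M_K ≥ n (det M_K)^{1/n}`, so
`c₂ = n / (n!)^{1/n}`; equality holds iff all eigenvalues coincide, i.e. `M_K` is scalar, which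
is exactly isotropy. -/

open Finset Matrix Equiv

namespace Real
variable {ι : Type*} [Fintype ι] [Nonempty ι]

lemma card_mul_prod_rpow_inv_card_le_sum {z : ι → ℝ} (hz : ∀ i, 0 ≤ z i) :
    (Fintype.card ι : ℝ) * (∏ i, z i) ^ (Fintype.card ι : ℝ)⁻¹ ≤ ∑ i, z i := by
  have hk : (0 : ℝ) < Fintype.card ι := by exact_mod_cast Fintype.card_pos
  have h := geom_mean_le_arith_mean_weighted univ (fun _ => (Fintype.card ι : ℝ)⁻¹) z
    (fun _ _ => by positivity) (by simp) (fun i _ => hz i)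
  rw [finsetProd_rpow _ _ (fun i _ => hz i), ← mul_sum] at h
  rw [← le_inv_mul_iff₀ hk]
  exact h

lemma card_mul_prod_rpow_inv_card_eq_sum_iff {z : ι → ℝ} (hz : ∀ i, 0 ≤ z i) :
    (Fintype.card ι : ℝ) * (∏ i, z i) ^ (Fintype.card ι : ℝ)⁻¹ = ∑ i, z i ↔
      ∀ j, z j = (∑ i, z i) / Fintype.card ι := by
  have hk : (0 : ℝ) < Fintype.card ι := by exact_mod_cast Fintype.card_pos
  have h := geom_mean_eq_arith_mean_weighted_iff_of_pos' univ
    (fun _ => (Fintype.card ι : ℝ)⁻¹) z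
    (fun _ _ => by positivity) (by simp) (fun i _ => hz i)
  rw [finsetProd_rpow _ _ (fun i _ => hz i), ← mul_sum, ← div_eq_inv_mul] at h
  simp only [mem_univ, forall_const] at h
  rw [← h, eq_div_iff hk.ne', mul_comm]

end Real

namespace Matrix
variable {ι : Type*} [Fintype ι] [DecidableEq ι]

lemma IsHermitian.eq_smul_one_of_forall_eigenvalues_eq {𝕜 : Type*} [RCLike 𝕜]
    {A : Matrix ι ι 𝕜} (hA : A.IsHermitian) {c : ℝ} (h : ∀ i, hA.eigenvalues i = c) :
    A = (c : 𝕜) • 1 := by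
  have hdiag : diagonal (RCLike.ofReal ∘ hA.eigenvalues) = (c : 𝕜) • (1 : Matrix ι ι 𝕜) := by
    rw [smul_one_eq_diagonal]
    congr 1
    funext i
    simp [h i]
  rw [hA.spectral_theorem, hdiag, map_smul, map_one]

lemma PosSemidef.card_mul_det_rpow_inv_card_le_trace [Nonempty ι] {A : Matrix ι ι ℝ}
    (hA : A.PosSemidef) :
    (Fintype.card ι : ℝ) * A.det ^ (Fintype.card ι : ℝ)⁻¹ ≤ A.trace := by
  rw [hA.isHermitian.det_eq_prod_eigenvalues, hA.isHermitian.trace_eq_sum_eigenvalues]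
  simpa using Real.card_mul_prod_rpow_inv_card_le_sum hA.eigenvalues_nonneg

lemma PosSemidef.card_mul_det_rpow_inv_card_eq_trace_iff [Nonempty ι] {A : Matrix ι ι ℝ}
    (hA : A.PosSemidef) :
    (Fintype.card ι : ℝ) * A.det ^ (Fintype.card ι : ℝ)⁻¹ = A.trace ↔ ∃ c : ℝ, A = c • 1 := by
  have hk : (Fintype.card ι : ℝ) ≠ 0 := by exact_mod_cast Fintype.card_ne_zero
  constructor
  · intro h
    rw [hA.isHermitian.det_eq_prod_eigenvalues, hA.isHermitian.trace_eq_sum_eigenvalues] at h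
    simp only [RCLike.ofReal_real_eq_id, id_eq] at h
    rw [Real.card_mul_prod_rpow_inv_card_eq_sum_iff hA.eigenvalues_nonneg] at h
    exact ⟨_, hA.isHermitian.eq_smul_one_of_forall_eigenvalues_eq h⟩
  · rintro ⟨c, rfl⟩
    have hc : 0 ≤ c := by
      obtain ⟨i⟩ := ‹Nonempty ι›
      simpa using hA.diag_nonneg (i := i)
    rw [det_smul, det_one, mul_one, trace_smul, trace_one, ← Real.rpow_natCast,
      ← Real.rpow_mul hc, mul_inv_cancel₀ hk, Real.rpow_one, smul_eq_mul, mul_comm]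

lemma IsHermitian.exists_forall_sphere_dotProduct_mulVec_eq_iff {A : Matrix ι ι ℝ}
    (hA : A.IsHermitian) :
    (∃ c : ℝ, ∀ y ∈ Metric.sphere (0 : EuclideanSpace ℝ ι) 1, ⇑y ⬝ᵥ (A *ᵥ ⇑y) = c) ↔
      ∃ c : ℝ, A = c • 1 := by
  constructor
  · rintro ⟨c, hc⟩
    refine ⟨c, hA.eq_smul_one_of_forall_eigenvalues_eq fun i => ?_⟩
    have hv : hA.eigenvectorBasis i ∈ Metric.sphere (0 : EuclideanSpace ℝ ι) 1 := by
      simp [hA.eigenvectorBasis.orthonormal.1 i]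
    simpa [← hc _ hv] using hA.eigenvalues_eq i
  · rintro ⟨c, rfl⟩
    refine ⟨c, fun y hy => ?_⟩
    have hy1 : ⇑y ⬝ᵥ ⇑y = 1 := by
      simpa [real_inner_self_eq_norm_sq, mem_sphere_zero_iff_norm.mp hy] using
        (EuclideanSpace.inner_eq_star_dotProduct y y).symm
    rw [smul_mulVec, one_mulVec, dotProduct_smul, hy1, smul_eq_mul, mul_one]

lemma det_sq_eq_sum_sum_prod {R : Type*} [CommRing R] (X : Matrix ι ι R) :
    X.det ^ 2 = ∑ σ : Perm ι, ∑ τ : Perm ι,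
      (Perm.sign σ : R) * Perm.sign τ * ∏ i, X i (σ i) * X i (τ i) := by
  have hdet : X.det = ∑ σ : Perm ι, (Perm.sign σ : R) * ∏ i, X i (σ i) := by
    rw [← det_transpose, det_apply']
    rfl
  rw [sq, hdet, sum_mul_sum]
  refine sum_congr rfl fun σ _ => sum_congr rfl fun τ _ => ?_
  rw [prod_mul_distrib]
  ring

lemma sum_perm_sign_mul_prod_apply_apply {R : Type*} [CommRing R] (M : Matrix ι ι R) (σ : Perm ι) :
    ∑ τ : Perm ι, (Perm.sign τ : R) * ∏ i, M (σ i) (τ i) = Perm.sign σ * M.det := by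
  rw [← det_permute, ← det_transpose, det_apply']
  rfl

end Matrix

section SecondMoments

variable {ι : Type*} [Fintype ι]

def secondMomentMatrix (K : Set (EuclideanSpace ℝ ι)) : Matrix ι ι ℝ :=
  of fun i j => ∫ x in K, x i * x j

variable {K : Set (EuclideanSpace ℝ ι)}

lemma integrableOn_coord_mul_coord (hK : IsCompact K) (i j : ι) :
    IntegrableOn (fun x : EuclideanSpace ℝ ι => x i * x j) K :=
  (by fun_prop : Continuous fun x : EuclideanSpace ℝ ι => x i * x j).continuousOn
    |>.integrableOn_compact hK

lemma integral_norm_sq_eq_trace (hK : IsCompact K) :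
    ∫ x in K, ‖x‖ ^ 2 = (secondMomentMatrix K).trace := by
  simp_rw [EuclideanSpace.norm_sq_eq, Real.norm_eq_abs, sq_abs, sq]
  exact integral_finsetSum _ fun i _ => integrableOn_coord_mul_coord hK i i

lemma integral_inner_sq_eq_dotProduct_mulVec (hK : IsCompact K) (y : EuclideanSpace ℝ ι) :
    ∫ x in K, ⟪x, y⟫_ℝ ^ 2 = ⇑y ⬝ᵥ (secondMomentMatrix K *ᵥ ⇑y) := by
  have hexpand : ∀ x : EuclideanSpace ℝ ι,
      ⟪x, y⟫_ℝ ^ 2 = ∑ i, ∑ j, y i * ((x i * x j) * y j) := by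
    intro x
    simp only [PiLp.inner_apply, RCLike.inner_apply, conj_trivial, sq, sum_mul_sum]
    exact sum_congr rfl fun i _ => sum_congr rfl fun j _ => by ring
  simp_rw [hexpand]
  rw [integral_finsetSum _ fun i _ => integrable_finsetSum _ fun j _ =>
    ((integrableOn_coord_mul_coord hK i j).mul_const _).const_mul _]
  refine sum_congr rfl fun i _ => ?_
  rw [integral_finsetSum _ fun j _ =>
      ((integrableOn_coord_mul_coord hK i j).mul_const _).const_mul _, mulVec, dotProduct, mul_sum]
  refine sum_congr rfl fun j _ => ?_
  rw [integral_const_mul, integral_mul_const]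
  rfl

lemma secondMomentMatrix_posSemidef (hK : IsCompact K) : (secondMomentMatrix K).PosSemidef := by
  refine posSemidef_iff_dotProduct_mulVec.mpr ⟨?_, fun y => ?_⟩
  · ext i j
    simp only [secondMomentMatrix, conjTranspose_apply, of_apply, star_trivial, mul_comm]
  · rw [star_trivial, ← integral_inner_sq_eq_dotProduct_mulVec hK (WithLp.toLp 2 y)]
    exact integral_nonneg fun x => sq_nonneg _

end SecondMoments

lemma Bquant_eq_factorial_mul_det {n : ℕ} {K : Set (EuclideanSpace ℝ (Fin n))}
    (hK : IsCompact K) :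
    Bquant n K = n.factorial * (secondMomentMatrix K).det := by
  have hterm (σ τ : Perm (Fin n)) : Integrable (fun x : Fin n → EuclideanSpace ℝ (Fin n) =>
      ∏ i, x i (σ i) * x i (τ i)) (Measure.pi fun _ => volume.restrict K) :=
    Integrable.fintype_prod (f := fun i (y : EuclideanSpace ℝ (Fin n)) => y (σ i) * y (τ i))
      fun i => integrableOn_coord_mul_coord hK _ _
  rw [Bquant, volume_pi, Measure.restrict_pi_pi]
  simp_rw [det_sq_eq_sum_sum_prod, of_apply]
  rw [integral_finsetSum _ fun σ _ => integrable_finsetSum _ fun τ _ => (hterm σ τ).const_mul _]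
  have hintegral (σ τ : Perm (Fin n)) :
      ∫ x : Fin n → EuclideanSpace ℝ (Fin n), (Perm.sign σ : ℝ) * (Perm.sign τ : ℝ) *
          ∏ i, x i (σ i) * x i (τ i) ∂(Measure.pi fun _ => volume.restrict K) =
        (Perm.sign σ : ℝ) * ((Perm.sign τ : ℝ) * ∏ i, secondMomentMatrix K (σ i) (τ i)) := by
    rw [integral_const_mul, mul_assoc,
      integral_fintype_prod_eq_prod fun i (y : EuclideanSpace ℝ (Fin n)) => y (σ i) * y (τ i)]
    simp only [secondMomentMatrix, of_apply]
  simp_rw [integral_finsetSum _ fun τ _ => (hterm _ τ).const_mul _, hintegral, ← mul_sum,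
    sum_perm_sign_mul_prod_apply_apply, ← mul_assoc, ← Int.cast_mul, ← Units.val_mul,
    Int.units_mul_self]
  simp [Fintype.card_perm]

/-- For any compact set `K` with positive volume and centroid at the
origin, `∫_K |x|² dx ≥ c₂ B(K)^{1/n}`, with equality iff `K` is isotropic; `c₂` is the same
dimensional constant for which equality holds for isotropic bodies. -/
theorem stmt11 (n : ℕ) (hn : 1 ≤ n) :
    ∃ c₂ : ℝ, 0 < c₂ ∧ ∀ K : Set (EuclideanSpace ℝ (Fin n)),
      IsCompact K → 0 < volume K → (∫ x in K, x) = 0 →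
      (c₂ * Bquant n K ^ ((1:ℝ)/n) ≤ ∫ x in K, ‖x‖ ^ 2) ∧
      ((∫ x in K, ‖x‖ ^ 2) = c₂ * Bquant n K ^ ((1:ℝ)/n) ↔
        ∃ c : ℝ, ∀ y ∈ Metric.sphere (0 : EuclideanSpace ℝ (Fin n)) 1,
          (∫ x in K, ⟪x, y⟫_ℝ ^ 2) = c) := by
  have : NeZero n := ⟨by omega⟩
  refine ⟨n / (n.factorial : ℝ) ^ ((1:ℝ)/n), by positivity, fun K hK _ _ => ?_⟩
  have hM := secondMomentMatrix_posSemidef hK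
  have hB : n / (n.factorial : ℝ) ^ ((1:ℝ)/n) * Bquant n K ^ ((1:ℝ)/n) =
      n * (secondMomentMatrix K).det ^ (n : ℝ)⁻¹ := by
    rw [Bquant_eq_factorial_mul_det hK, one_div, Real.mul_rpow (by positivity) hM.det_nonneg]
    field_simp
  simp_rw [hB, integral_norm_sq_eq_trace hK, integral_inner_sq_eq_dotProduct_mulVec hK,
    hM.isHermitian.exists_forall_sphere_dotProduct_mulVec_eq_iff, eq_comm (a := trace _)]
  have hle := hM.card_mul_det_rpow_inv_card_le_trace
  have heq := hM.card_mul_det_rpow_inv_card_eq_trace_iff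
  rw [Fintype.card_fin] at hle heq
  exact ⟨hle, heq⟩
end
end
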